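/- Fix 0 < ε < 1 and integers ξ, η with ξ - η = log₂(SNR), SNR = E_X/E_Z ≥ 1/ε, E_X = 2^ξ, E_Z = 2^η. Let p_l = 1/(1+e^{2^{l-ξ}}), q_l = 1/(1+e^{2^{l-η}}), and let L₁ ≥ -log₂ ε - η, L₂ ≥ -log₂ ε + ξ. Then Σ_{l=-L₁}^{L₂} [H(p_l ⊗ q_l) - H(q_l)] ≥ log₂(1 + SNR) - 5 ε log₂ e, where a ⊗ b = a(1-b) + b(1-a). -/

import Mathlib

noncomputable def binH (p : ℝ) : ℝ :=
  -(p * Real.logb 2 p) - (1 - p) * Real.logb 2 (1 - p)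

/-- Convolution of Bernoulli parameters. -/
def bconv (a b : ℝ) : ℝ := a * (1 - b) + b * (1 - a)

/-!
Put `d = ξ - η`, so that `q l = p (l + d)`. Since `a ⊗ b` is a convex combination of `a` and
`1 - a`, concavity gives `H(a ⊗ b) ≥ H(a)`, and the sum is at least `∑ (H(p l) - H(p (l + d)))`.
This telescopes to the `d` head terms `H(p l)`, `-L₁ ≤ l < -L₁ + d`, minus the `d` tail terms,
`L₂ < l ≤ L₂ + d`. In nats `H(1 / (1 + e^t)) = log (1 + e^{-t}) + t / (1 + e^t)` lies between
`log 2 - t` and `3 / t`, so summing geometric series the head is at least `d log 2 - ε` and the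
tail at most `3ε`, while `log (1 + 2^d) ≤ d log 2 + 2^{-d} ≤ d log 2 + ε`.
-/

open Finset Real

lemma binH_eq_binEntropy_div_log_two (p : ℝ) : binH p = binEntropy p / log 2 := by
  rw [binH, binEntropy, log_inv, log_inv, logb, logb]
  ring

lemma binEntropy_le_binEntropy_bconv {a b : ℝ} (ha : a ∈ Set.Icc 0 1) (hb : b ∈ Set.Icc 0 1) :
    binEntropy a ≤ binEntropy (bconv a b) := by
  have h1a : 1 - a ∈ Set.Icc (0 : ℝ) 1 := ⟨by linarith [ha.2], by linarith [ha.1]⟩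
  have := strictConcave_binEntropy.concaveOn.2 ha h1a (by linarith [hb.2] : 0 ≤ 1 - b) hb.1
    (by ring)
  simp only [binEntropy_one_sub, smul_eq_mul] at this
  calc binEntropy a = (1 - b) * binEntropy a + b * binEntropy a := by ring
    _ ≤ _ := this
    _ = binEntropy (bconv a b) := by rw [bconv]; ring_nf

lemma one_div_one_add_exp_mem_Icc (t : ℝ) : 1 / (1 + exp t) ∈ Set.Icc 0 1 :=
  ⟨by positivity, (div_le_one (by positivity)).2 (by linarith [exp_pos t])⟩

lemma binEntropy_one_div_one_add_exp (t : ℝ) :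
    binEntropy (1 / (1 + exp t)) = log (1 + exp (-t)) + t / (1 + exp t) := by
  have hE : 0 < exp t := exp_pos t
  have h1 : 1 - 1 / (1 + exp t) = exp t / (1 + exp t) := by field_simp; ring
  have h2 : 1 + exp (-t) = (1 + exp t) / exp t := by rw [exp_neg]; field_simp; ring
  rw [binEntropy, h1, h2, log_inv, log_inv, log_div (by positivity) hE.ne',
    log_div hE.ne' (by positivity), log_exp, one_div, log_inv]
  field_simp
  ring

lemma log_two_sub_le_binEntropy_one_div_one_add_exp {t : ℝ} (ht : 0 ≤ t) :
    log 2 - t ≤ binEntropy (1 / (1 + exp t)) := by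
  rw [binEntropy_one_div_one_add_exp]
  have hlog : log 2 - t ≤ log (1 + exp (-t)) := by
    have hle : exp (-t) ≤ 1 := exp_le_one_iff.2 (neg_nonpos.2 ht)
    have := log_le_log (by positivity) (by linarith : 2 * exp (-t) ≤ 1 + exp (-t))
    rwa [log_mul two_ne_zero (exp_pos _).ne', log_exp, ← sub_eq_add_neg] at this
  have : 0 ≤ t / (1 + exp t) := by positivity
  linarith

lemma binEntropy_one_div_one_add_exp_le {t : ℝ} (ht : 0 < t) :
    binEntropy (1 / (1 + exp t)) ≤ 3 / t := by
  rw [binEntropy_one_div_one_add_exp]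
  have hE : 0 < exp t := exp_pos t
  have hlog : log (1 + exp (-t)) ≤ exp (-t) := by
    linarith [log_le_sub_one_of_pos (by positivity : 0 < 1 + exp (-t))]
  have hfrac : t / (1 + exp t) ≤ t * exp (-t) := by
    rw [exp_neg, ← div_eq_mul_inv]
    exact div_le_div_of_nonneg_left ht.le hE (by linarith)
  have hquad : t * (1 + t) ≤ 3 * exp t := by nlinarith [quadratic_le_exp_of_nonneg ht.le]
  have : (1 + t) * exp (-t) ≤ 3 / t := by
    rw [exp_neg, ← div_eq_mul_inv, div_le_div_iff₀ hE ht]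
    linarith
  nlinarith

lemma Finset.sum_Ico_consecutive' {α M : Type*} [LinearOrder α] [LocallyFiniteOrder α]
    [AddCommMonoid M] (f : α → M) {a b c : α} (hab : a ≤ b) (hbc : b ≤ c) :
    ∑ x ∈ Ico a b, f x + ∑ x ∈ Ico b c, f x = ∑ x ∈ Ico a c, f x := by
  rw [← sum_union (Ico_disjoint_Ico_consecutive a b c), Ico_union_Ico_eq_Ico hab hbc]

lemma Finset.sum_Ico_sub_shift {M : Type*} [AddCommGroup M] (f : ℤ → M) {a b d : ℤ}
    (hd : 0 ≤ d) (hab : a + d ≤ b) :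
    ∑ l ∈ Ico a b, (f l - f (l + d)) = ∑ l ∈ Ico a (a + d), f l - ∑ l ∈ Ico b (b + d), f l := by
  rw [sum_sub_distrib, sum_Ico_add', ← sum_Ico_consecutive' f (by omega : a ≤ a + d) hab,
    ← sum_Ico_consecutive' f hab (by omega : b ≤ b + d)]
  abel

lemma geom_sum_Ico_zpow_mul {K : Type*} [Field K] {r : K} (hr : r ≠ 0) {a b : ℤ} (hab : a ≤ b) :
    (∑ l ∈ Ico a b, r ^ l) * (r - 1) = r ^ b - r ^ a := by
  induction b, hab using Int.leInduction with
  | base => simp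
  | succ b hab ih =>
    rw [← sum_Ico_add_eq_sum_Ico_add_one hab, add_mul, ih, zpow_add_one₀ hr]
    ring

lemma sum_Ico_zpow_sub {K : Type*} [DivisionRing K] (r : K) (a b c : ℤ) :
    ∑ l ∈ Ico a b, r ^ (l - c) = ∑ l ∈ Ico (a - c) (b - c), r ^ l := by
  simp only [sub_eq_add_neg, sum_Ico_add']

lemma sum_Ico_two_zpow_sub_le (a b c : ℤ) : ∑ l ∈ Ico a b, (2 : ℝ) ^ (l - c) ≤ 2 ^ (b - c) := by
  rcases le_or_gt a b with hab | hba
  · have h := geom_sum_Ico_zpow_mul (two_ne_zero (α := ℝ)) (sub_le_sub_right hab c)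
    rw [sum_Ico_zpow_sub]
    have : (0 : ℝ) < 2 ^ (a - c) := by positivity
    linarith
  · rw [Ico_eq_empty_of_le hba.le, sum_empty]
    positivity

lemma sum_Ico_two_zpow_const_sub_le (a b c : ℤ) :
    ∑ l ∈ Ico a b, (2 : ℝ) ^ (c - l) ≤ 2 ^ (c - a + 1) := by
  rcases le_or_gt a b with hab | hba
  · have h := geom_sum_Ico_zpow_mul (inv_ne_zero (two_ne_zero (α := ℝ))) (sub_le_sub_right hab c)
    have hinv : ∀ k : ℤ, (2 : ℝ)⁻¹ ^ (k - c) = 2 ^ (c - k) := fun k => by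
      rw [inv_zpow', neg_sub]
    simp only [← hinv, sum_Ico_zpow_sub]
    rw [zpow_add_one₀ two_ne_zero, ← hinv a]
    have : (0 : ℝ) < 2⁻¹ ^ (b - c) := by positivity
    linarith
  · rw [Ico_eq_empty_of_le hba.le, sum_empty]
    positivity

lemma sum_Ico_binEntropy_one_div_one_add_exp_ge (a b c : ℤ) (hab : a ≤ b) :
    ((b : ℝ) - a) * log 2 - 2 ^ (b - c) ≤
      ∑ l ∈ Ico a b, binEntropy (1 / (1 + exp (2 ^ (l - c)))) := by
  have hcard : ((#(Ico a b) : ℕ) : ℝ) = (b : ℝ) - a := by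
    rw [Int.card_Ico, ← Int.cast_natCast, Int.toNat_of_nonneg (sub_nonneg.2 hab), Int.cast_sub]
  calc ((b : ℝ) - a) * log 2 - 2 ^ (b - c) ≤ ∑ l ∈ Ico a b, (log 2 - (2 : ℝ) ^ (l - c)) := by
        rw [sum_sub_distrib, sum_const, nsmul_eq_mul, hcard]
        linarith [sum_Ico_two_zpow_sub_le a b c]
    _ ≤ _ := sum_le_sum fun l _ => log_two_sub_le_binEntropy_one_div_one_add_exp (by positivity)

lemma sum_Ico_binEntropy_one_div_one_add_exp_le (a b c : ℤ) :
    ∑ l ∈ Ico a b, binEntropy (1 / (1 + exp (2 ^ (l - c)))) ≤ 3 * 2 ^ (c - a + 1) := by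
  calc ∑ l ∈ Ico a b, binEntropy (1 / (1 + exp (2 ^ (l - c))))
      ≤ ∑ l ∈ Ico a b, 3 * (2 : ℝ) ^ (c - l) := sum_le_sum fun l _ => by
        have := binEntropy_one_div_one_add_exp_le (zpow_pos two_pos (l - c) : (0 : ℝ) < _)
        rwa [div_eq_mul_inv (3 : ℝ), ← zpow_neg, neg_sub] at this
    _ = 3 * ∑ l ∈ Ico a b, (2 : ℝ) ^ (c - l) := (mul_sum ..).symm
    _ ≤ 3 * 2 ^ (c - a + 1) := by gcongr; exact sum_Ico_two_zpow_const_sub_le a b c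

lemma log_one_add_two_zpow_le (d : ℤ) : log (1 + 2 ^ d) ≤ d * log 2 + 2 ^ (-d) := by
  have hfac : (1 : ℝ) + 2 ^ d = 2 ^ d * (1 + 2 ^ (-d)) := by
    rw [mul_add, mul_one, ← zpow_add₀ two_ne_zero, add_neg_cancel, zpow_zero, add_comm]
  rw [hfac, log_mul (by positivity) (by positivity), log_zpow]
  linarith [log_le_sub_one_of_pos (by positivity : (0 : ℝ) < 1 + 2 ^ (-d))]

theorem log_one_add_two_zpow_sub_le_sum_binEntropy_bconv (ε : ℝ) (hε0 : 0 < ε) (hε1 : ε ≤ 1)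
    (ξ d L₁ L₂ : ℤ) (hd : 1 / ε ≤ 2 ^ d) (hL₁ : (2 : ℝ) ^ (-L₁ + d - ξ) ≤ ε)
    (hL₂ : (2 : ℝ) ^ (ξ - L₂) ≤ ε) (p : ℤ → ℝ) (hp : ∀ l, p l = 1 / (1 + exp (2 ^ (l - ξ)))) :
    log (1 + 2 ^ d) - 5 * ε ≤
      ∑ l ∈ Icc (-L₁) L₂, (binEntropy (bconv (p l) (p (l + d))) - binEntropy (p (l + d))) := by
  have hd0 : 0 ≤ d := (one_le_zpow_iff_right₀ one_lt_two).1 ((one_le_one_div hε0 hε1).trans hd)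
  have hspan : -L₁ + d ≤ L₂ + 1 := by
    have : (2 : ℝ) ^ ((-L₁ + d - ξ) + (ξ - L₂)) ≤ 1 := by
      rw [zpow_add₀ two_ne_zero]
      nlinarith [mul_le_mul hL₁ hL₂ (by positivity) hε0.le]
    have := (zpow_le_one_iff_right₀ one_lt_two).1 this
    omega
  rw [← Ico_add_one_right_eq_Icc]
  have hmono : ∑ l ∈ Ico (-L₁) (L₂ + 1), (binEntropy (p l) - binEntropy (p (l + d))) ≤
      ∑ l ∈ Ico (-L₁) (L₂ + 1), (binEntropy (bconv (p l) (p (l + d))) - binEntropy (p (l + d))) := by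
    refine sum_le_sum fun l _ => sub_le_sub_right (binEntropy_le_binEntropy_bconv ?_ ?_) _ <;>
      rw [hp] <;> exact one_div_one_add_exp_mem_Icc _
  rw [sum_Ico_sub_shift _ hd0 hspan] at hmono
  have hlow := sum_Ico_binEntropy_one_div_one_add_exp_ge (-L₁) (-L₁ + d) ξ (by omega)
  have hup := sum_Ico_binEntropy_one_div_one_add_exp_le (L₂ + 1) (L₂ + 1 + d) ξ
  simp only [← hp] at hlow hup
  rw [show ξ - (L₂ + 1) + 1 = ξ - L₂ by ring] at hup
  rw [show ((-L₁ + d : ℤ) : ℝ) - ((-L₁ : ℤ) : ℝ) = d by push_cast; ring] at hlow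
  have hinv : (2 : ℝ) ^ (-d) ≤ ε := by
    rw [zpow_neg]
    exact inv_le_of_inv_le₀ hε0 (by rwa [← one_div])
  linarith [log_one_add_two_zpow_le d]

theorem stmt_12 (ε : ℝ) (hε0 : 0 < ε) (hε1 : ε < 1) (ξ η : ℤ)
    (SNR : ℝ) (hSNR : SNR = (2 : ℝ) ^ ξ / (2 : ℝ) ^ η) (hSNRε : SNR ≥ 1 / ε)
    (p q : ℤ → ℝ)
    (hp : ∀ l, p l = 1 / (1 + Real.exp ((2 : ℝ) ^ ((l : ℝ) - (ξ : ℝ)))))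
    (hq : ∀ l, q l = 1 / (1 + Real.exp ((2 : ℝ) ^ ((l : ℝ) - (η : ℝ)))))
    (L₁ L₂ : ℤ)
    (hL₁ : (L₁ : ℝ) ≥ -Real.logb 2 ε - (η : ℝ))
    (hL₂ : (L₂ : ℝ) ≥ -Real.logb 2 ε + (ξ : ℝ)) :
    ∑ l ∈ Finset.Icc (-L₁) L₂, (binH (bconv (p l) (q l)) - binH (q l)) ≥
      Real.logb 2 (1 + SNR) - 5 * ε * Real.logb 2 (Real.exp 1) := by
  have hzpow : ∀ l c : ℤ, (2 : ℝ) ^ ((l : ℝ) - (c : ℝ)) = 2 ^ (l - c) := fun l c => by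
    rw [← Int.cast_sub, rpow_intCast]
  have hp' : ∀ l, p l = 1 / (1 + exp (2 ^ (l - ξ))) := fun l => by rw [hp, hzpow]
  have hq' : ∀ l, q l = p (l + (ξ - η)) := fun l => by rw [hq, hp', hzpow]; ring_nf
  have hle_logb : ∀ c : ℤ, (c : ℝ) ≤ logb 2 ε → (2 : ℝ) ^ c ≤ ε := fun c hc => by
    rwa [le_logb_iff_rpow_le one_lt_two hε0, rpow_intCast] at hc
  have key := log_one_add_two_zpow_sub_le_sum_binEntropy_bconv ε hε0 hε1.le ξ (ξ - η) L₁ L₂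
    (by rwa [zpow_sub₀ two_ne_zero, ← hSNR]) (hle_logb _ (by push_cast; linarith))
    (hle_logb _ (by push_cast; linarith)) p hp'
  rw [ge_iff_le]
  calc logb 2 (1 + SNR) - 5 * ε * logb 2 (exp 1) = (log (1 + SNR) - 5 * ε) / log 2 := by
        rw [logb, logb, log_exp]; ring
    _ ≤ (∑ l ∈ Icc (-L₁) L₂, (binEntropy (bconv (p l) (q l)) - binEntropy (q l))) / log 2 := by
        rw [hSNR, ← zpow_sub₀ two_ne_zero]
        simp only [hq']
        exact div_le_div_of_nonneg_right key (log_pos one_lt_two).le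
    _ = _ := by simp only [binH_eq_binEntropy_div_log_two, sum_div, sub_div]
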